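/- Let {Sₙ} be a one-dimensional random walk on ℤ with i.i.d. steps. Fix N ≥ 2 and integers y₁,…,y_N with |yₙ − y_{n+1}| ≤ 1 for all n. Let X₀ be uniform on {0,…,N−1} independent of the walk, and Rₙ = (X₀ + Sₙ) mod N. Define p₀ = 1 and pᵢ = max_{|y| ≤ i} P{Sᵢ ∈ [y]_N} for i ≥ 1. Then P(⋃_{n=1}^N {Rₙ = yₙ mod N}) ≥ 1 / ∑_{i=0}^{N-1} pᵢ. -/

import Mathlib

/-!
Let `A n` be the event that the uniformly started walk sits in the class of `y n` at time `n`.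
Uniformity of the start gives `P(A n) = 1/N`, so the expected number of hits in times `1, …, N`
is `1`. Split this count according to the first hitting time `m`: given a hit at time `m`, a hit
at time `n ≥ m` forces `S n - S m ≡ y n - y m (mod N)`. That increment is independent of the
past and distributed like `S (n - m)`, and `|y n - y m| ≤ n - m`, so its probability is at most
`p (n - m)`. Hence `1 ≤ P(some hit) * ∑_{i<N} p i`.
-/

open MeasureTheory ProbabilityTheory Finset ENNReal

theorem abs_sub_le_of_abs_sub_succ_le_one {y : ℕ → ℤ} {a b : ℕ} (hab : a ≤ b)
    (hy : ∀ k, a ≤ k → k < b → |y k - y (k + 1)| ≤ 1) : |y b - y a| ≤ b - a := by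
  induction b, hab using Nat.le_induction with
  | base => simp
  | succ b hab ih =>
    calc |y (b + 1) - y a| ≤ |y (b + 1) - y b| + |y b - y a| := abs_sub_le _ _ _
      _ ≤ 1 + (b - a) := by
        gcongr
        · rw [abs_sub_comm]; exact hy b hab (lt_add_one b)
        · exact ih fun k hak hkb => hy k hak (by omega)
      _ = ((b + 1 : ℕ) : ℤ) - a := by push_cast; ring

theorem sum_measure_le_measure_biUnion_mul_sum {α : Type*} [MeasurableSpace α]
    (ν : Measure α) {A : ℕ → Set α} (hA : ∀ n, MeasurableSet (A n)) (q : ℕ → ℝ≥0∞) (N : ℕ)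
    (h : ∀ m n, m ≤ n → n < N →
      ν (disjointed A m ∩ A n) ≤ ν (disjointed A m) * q (n - m)) :
    ∑ n ∈ range N, ν (A n) ≤ ν (⋃ n ∈ range N, A n) * ∑ i ∈ range N, q i := by
  have hcover : ∀ n, A n ⊆ ⋃ m ∈ range (n + 1), disjointed A m ∩ A n := fun n x hx => by
    rw [← Set.iUnion₂_inter, biUnion_range_succ_disjointed]
    exact ⟨le_partialSups A n hx, hx⟩
  have htail : ∀ m, ∑ n ∈ Ico m N, q (n - m) ≤ ∑ i ∈ range N, q i := fun m => by
    rw [Finset.sum_Ico_eq_sum_range]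
    simp only [add_tsub_cancel_left]
    exact Finset.sum_le_sum_of_subset (Finset.range_subset_range.mpr (Nat.sub_le N m))
  calc ∑ n ∈ range N, ν (A n)
      ≤ ∑ n ∈ range N, ∑ m ∈ range (n + 1), ν (disjointed A m ∩ A n) :=
        Finset.sum_le_sum fun n _ =>
          (measure_mono (hcover n)).trans (measure_biUnion_finset_le _ _)
    _ ≤ ∑ n ∈ range N, ∑ m ∈ range (n + 1), ν (disjointed A m) * q (n - m) :=
        Finset.sum_le_sum fun n hn => Finset.sum_le_sum fun m hm =>
          h m n (Nat.lt_succ_iff.mp (Finset.mem_range.mp hm)) (Finset.mem_range.mp hn)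
    _ = ∑ m ∈ range N, ν (disjointed A m) * ∑ n ∈ Ico m N, q (n - m) := by
        simp only [Finset.range_eq_Ico, ← Finset.sum_Ico_Ico_comm, Finset.mul_sum]
    _ ≤ ∑ m ∈ range N, ν (disjointed A m) * ∑ i ∈ range N, q i := by
        gcongr with m; exact htail m
    _ = ν (⋃ m ∈ range N, disjointed A m) * ∑ i ∈ range N, q i := by
        rw [← Finset.sum_mul, measure_biUnion_finset
          (fun m _ n _ hmn => disjoint_disjointed A hmn) fun m _ => MeasurableSet.disjointed hA m]
    _ ≤ ν (⋃ n ∈ range N, A n) * ∑ i ∈ range N, q i := by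
        gcongr with m; exact disjointed_subset A m

theorem MeasureTheory.Measure.prod_inter_preimage_snd {α Ω : Type*} [MeasurableSpace α]
    [MeasurableSpace Ω] (ρ : Measure α) [SFinite ρ] (μ : Measure Ω) [SFinite μ]
    {C : Set (α × Ω)} {E : Set Ω} (hC : MeasurableSet C) (hE : MeasurableSet E)
    (h : ∀ x, μ (Prod.mk x ⁻¹' C ∩ E) = μ (Prod.mk x ⁻¹' C) * μ E) :
    (ρ.prod μ) (C ∩ Prod.snd ⁻¹' E) = (ρ.prod μ) C * μ E := by
  rw [Measure.prod_apply (hC.inter (measurable_snd hE)), Measure.prod_apply hC,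
    ← lintegral_mul_const _ (measurable_measure_prodMk_left hC)]
  exact lintegral_congr fun x => h x

theorem toMeasure_uniformOfFinset_range_setOf_modEq {N : ℕ} (hN : (range N).Nonempty)
    (s c : ℤ) :
    (PMF.uniformOfFinset (range N) hN).toMeasure {x : ℕ | (x : ℤ) + s ≡ c [ZMOD N]} =
      (N : ℝ≥0∞)⁻¹ := by
  have hNpos : (0 : ℤ) < N := by exact_mod_cast Nat.pos_of_ne_zero (nonempty_range_iff.mp hN)
  have hunique :
      ({x ∈ range N | (x : ℤ) + s ≡ c [ZMOD N]} : Finset ℕ) = {((c - s) % N).toNat} := by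
    ext x
    have h0 := Int.emod_nonneg (c - s) hNpos.ne'
    simp only [Finset.mem_filter, Finset.mem_range, Finset.mem_singleton]
    have hmod : (x : ℤ) + s ≡ c [ZMOD N] ↔ (x : ℤ) ≡ c - s [ZMOD N] :=
      ⟨fun h => by simpa using h.sub_right s, fun h => by simpa using h.add_right s⟩
    rw [hmod, Int.ModEq]
    constructor
    · rintro ⟨hx, h⟩
      rw [Int.emod_eq_of_lt (Nat.cast_nonneg x) (by exact_mod_cast hx)] at h
      omega
    · rintro rfl
      have h1 := Int.emod_lt_of_pos (c - s) hNpos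
      refine ⟨by omega, ?_⟩
      rw [Int.toNat_of_nonneg h0, Int.emod_emod_of_dvd _ dvd_rfl]
  rw [PMF.toMeasure_uniformOfFinset_apply hN _ MeasurableSet.of_discrete]
  simp only [Set.mem_ofPred_eq, hunique, Finset.card_singleton, Finset.card_range, Nat.cast_one,
    one_div]

section IndependentSequence

variable {Ω β : Type*} [mβ : MeasurableSpace β] {X : ℕ → Ω → β}

theorem measurable_sum_iSup_comap [AddCommMonoid β] [MeasurableAdd₂ β] {s : Finset ℕ}
    {T : Set ℕ} (hsT : ↑s ⊆ T) :
    Measurable[⨆ j ∈ T, mβ.comap (X j)] fun ω => ∑ j ∈ s, X j ω :=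
  Finset.measurable_sum s fun j hj =>
    (comap_measurable (X j)).mono (le_iSup₂ (f := fun j _ => mβ.comap (X j)) j (hsT hj)) le_rfl

variable [MeasurableSpace Ω] {μ : Measure Ω}

theorem ProbabilityTheory.iIndepFun.measure_inter_eq_mul_of_Iio_Ici
    (hX : ∀ i, Measurable (X i)) (hindep : iIndepFun X μ) (m : ℕ) {s t : Set Ω}
    (hs : MeasurableSet[⨆ j ∈ Set.Iio m, mβ.comap (X j)] s)
    (ht : MeasurableSet[⨆ j ∈ Set.Ici m, mβ.comap (X j)] t) :
    μ (s ∩ t) = μ s * μ t :=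
  (Indep_iff _ _ μ).1 (indep_iSup_of_disjoint (fun j => (hX j).comap_le)
    ((iIndepFun_iff_iIndep _ _ μ).1 hindep) (Set.Iio_disjoint_Ici le_rfl)) s t hs ht

theorem identDistrib_sum_Ico_sum_range [IsProbabilityMeasure μ] [AddCommMonoid β]
    [MeasurableAdd₂ β] (hX : ∀ i, Measurable (X i)) (hindep : iIndepFun X μ)
    (hident : ∀ i, IdentDistrib (X i) (X 0) μ μ) (m k : ℕ) :
    IdentDistrib (fun ω => ∑ j ∈ Ico m (m + k), X j ω) (fun ω => ∑ j ∈ range k, X j ω) μ μ := by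
  have hblock :
      IdentDistrib (fun ω (i : Fin k) => X (m + i) ω) (fun ω (i : Fin k) => X i ω) μ μ :=
    { aemeasurable_fst := (measurable_pi_lambda _ fun i => hX _).aemeasurable
      aemeasurable_snd := (measurable_pi_lambda _ fun i => hX _).aemeasurable
      map_eq := by
        have h₁ := (hindep.precomp (g := fun i : Fin k => m + (i : ℕ))
          ((add_right_injective m).comp Fin.val_injective)).map_fun_eq_pi_map
            fun i => (hX _).aemeasurable
        have h₂ := (hindep.precomp (g := fun i : Fin k => (i : ℕ))
          Fin.val_injective).map_fun_eq_pi_map fun i => (hX _).aemeasurable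
        refine h₁.trans (.trans ?_ h₂.symm)
        congr with i : 1
        rw [(hident (m + i)).map_eq, (hident i).map_eq] }
  convert hblock.comp (Finset.measurable_sum univ fun i _ => measurable_pi_apply i) using 1 <;>
    ext ω
  · rw [Function.comp_apply, Finset.sum_Ico_eq_sum_range, add_tsub_cancel_left,
      ← Fin.sum_univ_eq_sum_range (fun i => X (m + i) ω)]
  · rw [Function.comp_apply, ← Fin.sum_univ_eq_sum_range (fun i => X i ω)]

end IndependentSequence

section Hitting

variable {Ω : Type*}

def hitEvent (X : ℕ → Ω → ℤ) (N : ℕ) (y : ℕ → ℤ) (n : ℕ) : Set (ℕ × Ω) :=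
  {q | (q.1 : ℤ) + ∑ j ∈ range n, X j q.2 ≡ y n [ZMOD N]}

variable {X : ℕ → Ω → ℤ} {N : ℕ} {y : ℕ → ℤ}

theorem sum_Ico_modEq_of_mem_hitEvent {q : ℕ × Ω} {m n : ℕ} (hmn : m ≤ n)
    (hm : q ∈ hitEvent X N y m) (hn : q ∈ hitEvent X N y n) :
    ∑ j ∈ Ico m n, X j q.2 ≡ y n - y m [ZMOD N] := by
  have h := Int.ModEq.sub hn hm
  rwa [add_sub_add_left_eq_sub, ← Finset.sum_Ico_eq_sub _ hmn] at h

theorem measurableSet_preimage_disjointed_hitEvent (x m : ℕ) :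
    MeasurableSet[⨆ j ∈ Set.Iio (m + 1), MeasurableSpace.comap (X j) inferInstance]
      (Prod.mk x ⁻¹' disjointed (fun k => hitEvent X N y (k + 1)) m) := by
  have hslice : ∀ k ≤ m,
      MeasurableSet[⨆ j ∈ Set.Iio (m + 1), MeasurableSpace.comap (X j) inferInstance]
        (Prod.mk x ⁻¹' hitEvent X N y (k + 1)) := fun k hk => by
    have h := (measurable_sum_iSup_comap (X := X) (s := range (k + 1)) (T := Set.Iio (m + 1))
      fun j hj => Set.mem_Iio.2 (by have := Finset.mem_range.1 hj; omega)).const_add (x : ℤ)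
    exact h (.of_discrete (s := {z : ℤ | z ≡ y (k + 1) [ZMOD N]}))
  rw [disjointed_eq_inter_compl, Set.preimage_inter, Set.preimage_iInter₂]
  exact (hslice m le_rfl).inter (.iInter fun k => .iInter fun hk => (hslice k hk.le).compl)

variable [MeasurableSpace Ω]

theorem measurableSet_hitEvent (hX : ∀ i, Measurable (X i)) (n : ℕ) :
    MeasurableSet (hitEvent X N y n) := by
  have h : Measurable fun q : ℕ × Ω => (q.1 : ℤ) + ∑ j ∈ range n, X j q.2 :=
    (Measurable.of_discrete.comp measurable_fst).add
      ((Finset.measurable_sum _ fun j _ => hX j).comp measurable_snd)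
  exact h (.of_discrete (s := {z : ℤ | z ≡ y n [ZMOD N]}))

theorem measure_hitEvent (hX : ∀ i, Measurable (X i)) (μ : Measure Ω) [IsProbabilityMeasure μ]
    (hN : (range N).Nonempty) (n : ℕ) :
    ((PMF.uniformOfFinset (range N) hN).toMeasure.prod μ) (hitEvent X N y n) =
      (N : ℝ≥0∞)⁻¹ := by
  rw [Measure.prod_apply_symm (measurableSet_hitEvent hX n)]
  simp only [hitEvent, Set.preimage_ofPred_eq, toMeasure_uniformOfFinset_range_setOf_modEq,
    lintegral_const, measure_univ, mul_one]

theorem measure_disjointed_inter_hitEvent_le (hX : ∀ i, Measurable (X i)) {μ : Measure Ω}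
    [IsProbabilityMeasure μ] (hindep : iIndepFun X μ)
    (hident : ∀ i, IdentDistrib (X i) (X 0) μ μ) (ρ : Measure ℕ) [SFinite ρ] {m n : ℕ}
    (hmn : m ≤ n) :
    (ρ.prod μ) (disjointed (fun k => hitEvent X N y (k + 1)) m ∩ hitEvent X N y (n + 1)) ≤
      (ρ.prod μ) (disjointed (fun k => hitEvent X N y (k + 1)) m) *
        μ {ω | ∑ j ∈ range (n - m), X j ω ≡ y (n + 1) - y (m + 1) [ZMOD N]} := by
  set D := disjointed (fun k => hitEvent X N y (k + 1)) m
  set E := {ω | ∑ j ∈ Ico (m + 1) (n + 1), X j ω ≡ y (n + 1) - y (m + 1) [ZMOD N]}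
  have hC : MeasurableSet {z : ℤ | z ≡ y (n + 1) - y (m + 1) [ZMOD N]} := .of_discrete
  have hD : MeasurableSet D := .disjointed (fun k => measurableSet_hitEvent hX _) m
  have hE : MeasurableSet E := (Finset.measurable_sum _ fun j _ => hX j) hC
  have hsub : D ∩ hitEvent X N y (n + 1) ⊆ D ∩ Prod.snd ⁻¹' E := fun q ⟨hqD, hqn⟩ =>
    ⟨hqD, sum_Ico_modEq_of_mem_hitEvent (by omega) (disjointed_subset _ m hqD) hqn⟩
  have hlaw : μ E = μ {ω | ∑ j ∈ range (n - m), X j ω ≡ y (n + 1) - y (m + 1) [ZMOD N]} := by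
    have h := identDistrib_sum_Ico_sum_range hX hindep hident (m + 1) (n - m)
    rw [show m + 1 + (n - m) = n + 1 by omega] at h
    exact h.measure_mem_eq hC
  calc (ρ.prod μ) (D ∩ hitEvent X N y (n + 1))
      ≤ (ρ.prod μ) (D ∩ Prod.snd ⁻¹' E) := measure_mono hsub
    _ = (ρ.prod μ) D * μ E := ρ.prod_inter_preimage_snd μ hD hE fun x =>
        hindep.measure_inter_eq_mul_of_Iio_Ici hX (m + 1)
          (measurableSet_preimage_disjointed_hitEvent x m)
          (measurable_sum_iSup_comap (fun j hj => Set.mem_Ici.2 (Finset.mem_Ico.1 hj).1) hC)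
    _ = _ := by rw [hlaw]

end Hitting

theorem catch_prob_lower_bound {Ω : Type*} [MeasurableSpace Ω] (μ : Measure Ω)
    [IsProbabilityMeasure μ] (X : ℕ → Ω → ℤ) (hX : ∀ i, Measurable (X i))
    (hindep : iIndepFun X μ)
    (hident : ∀ i, IdentDistrib (X i) (X 0) μ μ)
    (N : ℕ) (hN : 2 ≤ N) (y : ℕ → ℤ)
    (hy : ∀ n, 1 ≤ n → n + 1 ≤ N → |y n - y (n + 1)| ≤ 1)
    (p : ℕ → ℝ≥0∞) (hp0 : p 0 = 1)
    (hp : ∀ i, 1 ≤ i → p i = ⨆ l ∈ Finset.Icc (-(i : ℤ)) (i : ℤ),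
        μ {ω | (∑ j ∈ Finset.range i, X j ω) % (N : ℤ) = l % (N : ℤ)}) :
    (∑ i ∈ Finset.range N, p i)⁻¹ ≤
      ((PMF.uniformOfFinset (Finset.range N)
            (Finset.nonempty_range_iff.mpr (by omega))).toMeasure.prod μ)
        {q : ℕ × Ω | ∃ n, 1 ≤ n ∧ n ≤ N ∧
          ((q.1 : ℤ) + ∑ j ∈ Finset.range n, X j q.2) % (N : ℤ) = y n % (N : ℤ)} := by
  set ν := (PMF.uniformOfFinset (range N) (nonempty_range_iff.mpr (by omega))).toMeasure.prod μ
  set A : ℕ → Set (ℕ × Ω) := fun k => hitEvent X N y (k + 1)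
  have htarget : {q : ℕ × Ω | ∃ n, 1 ≤ n ∧ n ≤ N ∧
      ((q.1 : ℤ) + ∑ j ∈ range n, X j q.2) % (N : ℤ) = y n % (N : ℤ)} = ⋃ k ∈ range N, A k := by
    ext q
    simp only [Set.mem_ofPred_eq, Set.mem_iUnion, Finset.mem_range, exists_prop, A, hitEvent]
    constructor
    · rintro ⟨n, hn1, hnN, h⟩
      exact ⟨n - 1, by omega, by rwa [Nat.sub_add_cancel hn1]⟩
    · rintro ⟨k, hk, h⟩
      exact ⟨k + 1, by omega, hk, h⟩
  have hsumA : ∑ k ∈ range N, ν (A k) = 1 := by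
    simp only [A, ν, measure_hitEvent hX, sum_const, card_range, nsmul_eq_mul]
    exact ENNReal.mul_inv_cancel (by exact_mod_cast (by omega : N ≠ 0)) (natCast_ne_top N)
  have hstep : ∀ m n, m ≤ n → n < N →
      ν (disjointed A m ∩ A n) ≤ ν (disjointed A m) * p (n - m) := by
    intro m n hmn hnN
    rcases hmn.eq_or_lt with rfl | hlt
    · simpa [hp0] using measure_mono Set.inter_subset_left
    refine (measure_disjointed_inter_hitEvent_le hX hindep hident _ hmn).trans
      (mul_le_mul_right ?_ _)
    rw [hp (n - m) (by omega)]
    refine le_iSup₂_of_le (y (n + 1) - y (m + 1)) ?_ le_rfl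
    have hlip := abs_sub_le_of_abs_sub_succ_le_one (y := y) (a := m + 1) (b := n + 1) (by omega)
      fun k hk1 hk2 => hy k (by omega) (by omega)
    rw [Finset.mem_Icc, ← abs_le]
    omega
  rw [htarget, ← one_div]
  exact ENNReal.div_le_of_le_mul (hsumA ▸
    sum_measure_le_measure_biUnion_mul_sum ν (fun k => measurableSet_hitEvent hX _) p N hstep)
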